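/- arXiv:2412.04227 — 8 statements merged into one kernel-verified Lean document; each statement's English description precedes it below -/
import Mathlib

section
/- Sufficient condition for the satisfaction axiom: suppose the score X with domain D satisfies min_{ω∈E} S(ω) ≤ X(p) ≤ max_{ω∈E} S(ω) for every nonempty subset E ⊆ Ω and every performance p ∈ D with p(E) = 1. Then for every s ∈ ℝ and all performances p₁, p₂ with p₁({ω : S(ω) ≤ s}) = 1 and p₂({ω : S(ω) ≥ s}) = 1, either p₁ ≲_X p₂, or (¬(p₁ ≲_X p₂) and ¬(p₂ ≲_X p₁)). -/
/-!
A performance in `D` carrying all its mass on `{S ≤ s}` has score at most the maximum of `S`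
there, hence at most `s`; symmetrically one carried by `{s ≤ S}` has score at least `s`. So
`X p₁ ≤ s ≤ X p₂` whenever both lie in `D`, and otherwise neither is below the other unless
`p₁ = p₂`.
-/

/-- A performance on a finite sample space: nonnegative and summing to one. -/
def IsPerformance {Ω : Type*} [Fintype Ω] (p : Ω → ℝ) : Prop :=
  (∀ ω, 0 ≤ p ω) ∧ ∑ ω, p ω = 1

/-- The relation induced by a score `X` with domain `D`. -/
def scoreRel {P : Type*} (D : Set P) (X : P → ℝ) (p₁ p₂ : P) : Prop :=
  p₁ = p₂ ∨ (p₁ ∈ D ∧ p₂ ∈ D ∧ X p₁ ≤ X p₂)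

theorem scoreRel_or_incomparable {P : Type*} {D : Set P} {X : P → ℝ} {p₁ p₂ : P}
    (h : p₁ ∈ D → p₂ ∈ D → X p₁ ≤ X p₂) :
    scoreRel D X p₁ p₂ ∨ (¬ scoreRel D X p₁ p₂ ∧ ¬ scoreRel D X p₂ p₁) := by
  by_cases hD : p₁ ∈ D ∧ p₂ ∈ D
  · exact Or.inl (Or.inr ⟨hD.1, hD.2, h hD.1 hD.2⟩)
  by_cases heq : p₁ = p₂
  · exact Or.inl (Or.inl heq)
  refine Or.inr ⟨?_, ?_⟩
  · rintro (heq' | ⟨hp₁, hp₂, -⟩)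
    exacts [heq heq', hD ⟨hp₁, hp₂⟩]
  · rintro (heq' | ⟨hp₂, hp₁, -⟩)
    exacts [heq heq'.symm, hD ⟨hp₁, hp₂⟩]

def ScoreWithinSatisfactionRange {Ω : Type*} [Fintype Ω] (S : Ω → ℝ) (D : Set (Ω → ℝ))
    (X : (Ω → ℝ) → ℝ) : Prop :=
  ∀ (E : Finset Ω) (hE : E.Nonempty) (p : Ω → ℝ), p ∈ D →
    (∑ ω ∈ E, p ω) = 1 → E.inf' hE S ≤ X p ∧ X p ≤ E.sup' hE S

section

variable {Ω : Type*} [Fintype Ω] {S : Ω → ℝ} {D : Set (Ω → ℝ)} {X : (Ω → ℝ) → ℝ}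
  {p : Ω → ℝ} {s : ℝ}

theorem ScoreWithinSatisfactionRange.le_of_mass_sublevel
    (hX : ScoreWithinSatisfactionRange S D X)
    (hp : p ∈ D) (hmass : ∑ ω ∈ Finset.univ.filter (fun ω => S ω ≤ s), p ω = 1) : X p ≤ s :=
  have hE := Finset.nonempty_of_sum_ne_zero (hmass ▸ one_ne_zero)
  (hX _ hE p hp hmass).2.trans <| Finset.sup'_le _ _ fun _ hω => (Finset.mem_filter.1 hω).2

theorem ScoreWithinSatisfactionRange.ge_of_mass_superlevel
    (hX : ScoreWithinSatisfactionRange S D X)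
    (hp : p ∈ D) (hmass : ∑ ω ∈ Finset.univ.filter (fun ω => s ≤ S ω), p ω = 1) : s ≤ X p :=
  have hE := Finset.nonempty_of_sum_ne_zero (hmass ▸ one_ne_zero)
  (Finset.le_inf' _ _ fun _ hω => (Finset.mem_filter.1 hω).2).trans (hX _ hE p hp hmass).1

end

theorem stmt1_general {Ω : Type*} [Fintype Ω] (S : Ω → ℝ)
    (D : Set (Ω → ℝ)) (X : (Ω → ℝ) → ℝ)
    (hX : ∀ (E : Finset Ω) (hE : E.Nonempty) (p : Ω → ℝ), p ∈ D →
      (∑ ω ∈ E, p ω) = 1 → E.inf' hE S ≤ X p ∧ X p ≤ E.sup' hE S)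
    (s : ℝ) (p₁ p₂ : Ω → ℝ)
    (hp₁ : ∑ ω ∈ Finset.univ.filter (fun ω => S ω ≤ s), p₁ ω = 1)
    (hp₂ : ∑ ω ∈ Finset.univ.filter (fun ω => s ≤ S ω), p₂ ω = 1) :
    scoreRel D X p₁ p₂ ∨ (¬ scoreRel D X p₁ p₂ ∧ ¬ scoreRel D X p₂ p₁) :=
  have hX : ScoreWithinSatisfactionRange S D X := hX
  scoreRel_or_incomparable fun hD₁ hD₂ =>
    (hX.le_of_mass_sublevel hD₁ hp₁).trans (hX.ge_of_mass_superlevel hD₂ hp₂)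

theorem stmt1 {Ω : Type*} [Fintype Ω] [Nonempty Ω] (S : Ω → ℝ)
    (D : Set (Ω → ℝ)) (hD : ∀ p ∈ D, IsPerformance p) (X : (Ω → ℝ) → ℝ)
    (hX : ∀ (E : Finset Ω) (hE : E.Nonempty) (p : Ω → ℝ), p ∈ D →
      (∑ ω ∈ E, p ω) = 1 → E.inf' hE S ≤ X p ∧ X p ≤ E.sup' hE S)
    (s : ℝ) (p₁ p₂ : Ω → ℝ) (h₁ : IsPerformance p₁) (h₂ : IsPerformance p₂)
    (hp₁ : ∑ ω ∈ Finset.univ.filter (fun ω => S ω ≤ s), p₁ ω = 1)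
    (hp₂ : ∑ ω ∈ Finset.univ.filter (fun ω => s ≤ S ω), p₂ ω = 1) :
    scoreRel D X p₁ p₂ ∨ (¬ scoreRel D X p₁ p₂ ∧ ¬ scoreRel D X p₂ p₁) :=
  stmt1_general S D X hX s p₁ p₂ hp₁ hp₂
end

section
/- A ranking score evaluated at a convex combination lies between the extremes: for every finite family p₁, …, pₙ ∈ dom(R_I) (n ≥ 1) and nonnegative reals λ₁, …, λₙ with λ₁ + ⋯ + λₙ = 1, one has min_{1≤i≤n} R_I(pᵢ) ≤ R_I(∑ᵢ λᵢ pᵢ) ≤ max_{1≤i≤n} R_I(pᵢ). -/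
/-- An importance: nonnegative and nonzero. -/
def IsImportance {Ω : Type*} [Fintype Ω] (I : Ω → ℝ) : Prop :=
  (∀ ω, 0 ≤ I ω) ∧ ∃ ω, 0 < I ω

/-- The ranking score with importance `I` and satisfaction `S`. -/
noncomputable def rankingScore {Ω : Type*} [Fintype Ω] (I S p : Ω → ℝ) : ℝ :=
  (∑ ω, I ω * S ω * p ω) / (∑ ω, I ω * p ω)

/-! The score of a mixture `∑ λᵢ pᵢ` is the centre of mass of the scores `R_I(pᵢ)` with weights
`λᵢ · ∑_ω I ω pᵢ ω`. When every `pᵢ` lies in the domain these weights are nonnegative with positive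
sum, so the centre of mass lies between the smallest and the largest score. -/

open Finset

section RankingScore

variable {Ω ι : Type*} [Fintype Ω]

theorem sum_mul_sum_smul_apply (c : Ω → ℝ) (s : Finset ι) (l : ι → ℝ) (p : ι → Ω → ℝ) :
    ∑ ω, c ω * (∑ i ∈ s, l i • p i) ω = ∑ i ∈ s, l i * ∑ ω, c ω * p i ω := by
  simp only [Finset.sum_apply, Pi.smul_apply, smul_eq_mul, Finset.mul_sum]
  rw [Finset.sum_comm]
  exact sum_congr rfl fun i _ => sum_congr rfl fun ω _ => by ring

theorem rankingScore_sum_smul (I S : Ω → ℝ) (s : Finset ι) (l : ι → ℝ) (p : ι → Ω → ℝ)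
    (hp : ∀ i ∈ s, ∑ ω, I ω * p i ω ≠ 0) :
    rankingScore I S (∑ i ∈ s, l i • p i) =
      s.centerMass (fun i => l i * ∑ ω, I ω * p i ω) (fun i => rankingScore I S (p i)) := by
  have hnum : ∑ i ∈ s, l i * ∑ ω, I ω * S ω * p i ω =
      ∑ i ∈ s, (l i * ∑ ω, I ω * p i ω) * rankingScore I S (p i) :=
    sum_congr rfl fun i hi => by
      rw [rankingScore, mul_assoc, mul_div_cancel₀ _ (hp i hi)]
  rw [rankingScore, sum_mul_sum_smul_apply, sum_mul_sum_smul_apply, hnum, centerMass,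
    smul_eq_mul, inv_mul_eq_div]
  rfl

theorem sum_importance_mul_pos {I p : Ω → ℝ} (hI : ∀ ω, 0 ≤ I ω) (hp : IsPerformance p)
    (hdom : ∑ ω, I ω * p ω ≠ 0) : 0 < ∑ ω, I ω * p ω :=
  (sum_nonneg fun ω _ => mul_nonneg (hI ω) (hp.1 ω)).lt_of_ne' hdom

end RankingScore

theorem stmt5_general {Ω : Type*} [Fintype Ω] (S I : Ω → ℝ)
    (hI : IsImportance I) (n : ℕ) (hn : 1 ≤ n)
    (p : Fin n → Ω → ℝ)
    (hp : ∀ i, IsPerformance (p i) ∧ ∑ ω, I ω * p i ω ≠ 0)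
    (l : Fin n → ℝ) (hl : ∀ i, 0 ≤ l i) (hl1 : ∑ i, l i = 1) :
    (Finset.univ.inf' ⟨⟨0, hn⟩, Finset.mem_univ _⟩ (fun i => rankingScore I S (p i))
        ≤ rankingScore I S (∑ i, l i • p i)) ∧
    (rankingScore I S (∑ i, l i • p i)
        ≤ Finset.univ.sup' ⟨⟨0, hn⟩, Finset.mem_univ _⟩ (fun i => rankingScore I S (p i))) := by
  have hden i : 0 < ∑ ω, I ω * p i ω := sum_importance_mul_pos hI.1 (hp i).1 (hp i).2
  have hw₀ : ∀ i ∈ univ, 0 ≤ l i * ∑ ω, I ω * p i ω := fun i _ => mul_nonneg (hl i) (hden i).le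
  obtain ⟨j, -, hj⟩ := exists_lt_of_sum_lt (f := 0) (s := univ) (g := l) (by simp [hl1])
  have hw₁ : 0 < ∑ i, l i * ∑ ω, I ω * p i ω :=
    sum_pos' hw₀ ⟨j, mem_univ j, mul_pos hj (hden j)⟩
  rw [rankingScore_sum_smul I S univ l p fun i _ => (hp i).2]
  exact ⟨inf_le_centerMass hw₀ hw₁, centerMass_le_sup hw₀ hw₁⟩

theorem stmt5 {Ω : Type*} [Fintype Ω] [Nonempty Ω] (S I : Ω → ℝ)
    (hI : IsImportance I) (n : ℕ) (hn : 1 ≤ n)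
    (p : Fin n → Ω → ℝ)
    (hp : ∀ i, IsPerformance (p i) ∧ ∑ ω, I ω * p i ω ≠ 0)
    (l : Fin n → ℝ) (hl : ∀ i, 0 ≤ l i) (hl1 : ∑ i, l i = 1) :
    (Finset.univ.inf' ⟨⟨0, hn⟩, Finset.mem_univ _⟩ (fun i => rankingScore I S (p i))
        ≤ rankingScore I S (∑ i, l i • p i)) ∧
    (rankingScore I S (∑ i, l i • p i)
        ≤ Finset.univ.sup' ⟨⟨0, hn⟩, Finset.mem_univ _⟩ (fun i => rankingScore I S (p i))) :=
  stmt5_general S I hI n hn p hp l hl hl1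
end

section
/- For a binary satisfaction, the ordering induced by a ranking score is insensitive to uniform scaling of the importance on the unsatisfying and satisfying samples: assume S(ω) ∈ {0,1} for all ω ∈ Ω, let α₀ > 0 and α₁ > 0, and define I'(ω) = α₀·I(ω) if S(ω) = 0 and I'(ω) = α₁·I(ω) if S(ω) = 1. Then I' is an importance, dom(R_{I'}) = dom(R_I), and for all performances p, q ∈ dom(R_I): R_{I'}(p) ≤ R_{I'}(q) if and only if R_I(p) ≤ R_I(q). -/
private lemma ratio_mono {α₀ α₁ x y : ℝ} (h0 : 0 < α₀) (h1 : 0 < α₁)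
    (hx0 : 0 ≤ x) (hx1 : x ≤ 1) (hy0 : 0 ≤ y) (hy1 : y ≤ 1) :
    α₁ * x / (α₁ * x + α₀ * (1 - x)) ≤ α₁ * y / (α₁ * y + α₀ * (1 - y)) ↔ x ≤ y := by
  have hdx : 0 < α₁ * x + α₀ * (1 - x) := by
    rcases le_total α₀ α₁ with h | h
    · nlinarith [mul_nonneg (sub_nonneg.2 h) hx0]
    · nlinarith [mul_nonneg (sub_nonneg.2 h) (sub_nonneg.2 hx1)]
  have hdy : 0 < α₁ * y + α₀ * (1 - y) := by
    rcases le_total α₀ α₁ with h | h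
    · nlinarith [mul_nonneg (sub_nonneg.2 h) hy0]
    · nlinarith [mul_nonneg (sub_nonneg.2 h) (sub_nonneg.2 hy1)]
  rw [div_le_div_iff₀ hdx hdy]
  constructor
  · intro h; nlinarith [mul_pos h0 h1]
  · intro h; nlinarith [mul_nonneg (mul_pos h0 h1).le (sub_nonneg.2 h)]

theorem stmt9 {Ω : Type*} [Fintype Ω] [Nonempty Ω] (S I : Ω → ℝ)
    (hI : IsImportance I) (hS : ∀ ω, S ω = 0 ∨ S ω = 1)
    (α₀ α₁ : ℝ) (h0 : 0 < α₀) (h1 : 0 < α₁) :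
    IsImportance (fun ω => if S ω = 0 then α₀ * I ω else α₁ * I ω) ∧
    {p : Ω → ℝ | IsPerformance p ∧
        ∑ ω, (if S ω = 0 then α₀ * I ω else α₁ * I ω) * p ω ≠ 0} =
      {p : Ω → ℝ | IsPerformance p ∧ ∑ ω, I ω * p ω ≠ 0} ∧
    ∀ p q : Ω → ℝ, IsPerformance p → IsPerformance q →
      ∑ ω, I ω * p ω ≠ 0 → ∑ ω, I ω * q ω ≠ 0 →
      (rankingScore (fun ω => if S ω = 0 then α₀ * I ω else α₁ * I ω) S p ≤
          rankingScore (fun ω => if S ω = 0 then α₀ * I ω else α₁ * I ω) S q ↔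
        rankingScore I S p ≤ rankingScore I S q) := by
  -- basic facts
  have ha_nonneg : ∀ p : Ω → ℝ, IsPerformance p → 0 ≤ ∑ ω, I ω * S ω * p ω := by
    intro p hp
    apply Finset.sum_nonneg
    intro ω _
    rcases hS ω with h | h <;> simp [h]
    exact mul_nonneg (hI.1 ω) (hp.1 ω)
  have ha_le : ∀ p : Ω → ℝ, IsPerformance p →
      ∑ ω, I ω * S ω * p ω ≤ ∑ ω, I ω * p ω := by
    intro p hp
    apply Finset.sum_le_sum
    intro ω _
    rcases hS ω with h | h <;> simp [h]
    exact mul_nonneg (hI.1 ω) (hp.1 ω)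
  have hd_nonneg : ∀ p : Ω → ℝ, IsPerformance p → 0 ≤ ∑ ω, I ω * p ω := by
    intro p hp
    exact Finset.sum_nonneg fun ω _ => mul_nonneg (hI.1 ω) (hp.1 ω)
  have hnum : ∀ p : Ω → ℝ,
      ∑ ω, (if S ω = 0 then α₀ * I ω else α₁ * I ω) * S ω * p ω
        = α₁ * ∑ ω, I ω * S ω * p ω := by
    intro p
    rw [Finset.mul_sum]
    apply Finset.sum_congr rfl
    intro ω _
    rcases hS ω with h | h <;> simp [h] <;> ring
  have hden : ∀ p : Ω → ℝ,
      ∑ ω, (if S ω = 0 then α₀ * I ω else α₁ * I ω) * p ω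
        = α₁ * (∑ ω, I ω * S ω * p ω)
          + α₀ * ((∑ ω, I ω * p ω) - ∑ ω, I ω * S ω * p ω) := by
    intro p
    rw [mul_sub, Finset.mul_sum, Finset.mul_sum, Finset.mul_sum,
      ← Finset.sum_sub_distrib, ← Finset.sum_add_distrib]
    apply Finset.sum_congr rfl
    intro ω _
    rcases hS ω with h | h <;> simp [h] <;> ring
  have hden_pos : ∀ p : Ω → ℝ, IsPerformance p → (∑ ω, I ω * p ω) ≠ 0 →
      0 < α₁ * (∑ ω, I ω * S ω * p ω)
        + α₀ * ((∑ ω, I ω * p ω) - ∑ ω, I ω * S ω * p ω) := by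
    intro p hp hne
    have hd : 0 < ∑ ω, I ω * p ω := (hd_nonneg p hp).lt_of_ne (Ne.symm hne)
    have ha := ha_nonneg p hp
    have hal := ha_le p hp
    rcases le_total α₀ α₁ with h | h
    · nlinarith [mul_nonneg (sub_nonneg.2 h) ha, mul_pos h0 hd]
    · nlinarith [mul_nonneg (sub_nonneg.2 h) (sub_nonneg.2 hal), mul_pos h1 hd]
  refine ⟨⟨?_, ?_⟩, ?_, ?_⟩
  · intro ω
    dsimp only
    split <;> exact mul_nonneg (by positivity) (hI.1 ω)
  · obtain ⟨ω, hω⟩ := hI.2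
    refine ⟨ω, ?_⟩
    dsimp only
    split
    · exact mul_pos h0 hω
    · exact mul_pos h1 hω
  · ext p
    simp only [Set.mem_setOf_eq]
    constructor
    · rintro ⟨hp, hne⟩
      refine ⟨hp, fun h => hne ?_⟩
      have ha0 : ∑ ω, I ω * S ω * p ω = 0 :=
        le_antisymm (h ▸ ha_le p hp) (ha_nonneg p hp)
      rw [hden p, ha0, h]; ring
    · rintro ⟨hp, hne⟩
      exact ⟨hp, by rw [hden p]; exact (hden_pos p hp hne).ne'⟩
  · intro p q hp hq hnp hnq
    have hdp : 0 < ∑ ω, I ω * p ω := (hd_nonneg p hp).lt_of_ne (Ne.symm hnp)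
    have hdq : 0 < ∑ ω, I ω * q ω := (hd_nonneg q hq).lt_of_ne (Ne.symm hnq)
    have key : ∀ r : Ω → ℝ, IsPerformance r → (0 < ∑ ω, I ω * r ω) →
        rankingScore (fun ω => if S ω = 0 then α₀ * I ω else α₁ * I ω) S r
          = α₁ * rankingScore I S r
            / (α₁ * rankingScore I S r + α₀ * (1 - rankingScore I S r)) := by
      intro r hr hdr
      have hden' := hden_pos r hr hdr.ne'
      unfold rankingScore
      rw [hnum r, hden r]
      field_simp
    rw [key p hp hdp, key q hq hdq]
    exact ratio_mono h0 h1
      (div_nonneg (ha_nonneg p hp) hdp.le) ((div_le_one hdp).2 (ha_le p hp))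
      (div_nonneg (ha_nonneg q hq) hdq.le) ((div_le_one hdq).2 (ha_le q hq))
end

section
/- Harmonic-mean property of ranking scores: assume S(ω) ∈ {0,1} for all ω ∈ Ω, let I₁ and I₂ be importances with I₁(ω) = I₂(ω) for every ω with S(ω) = 1, and let I = (I₁ + I₂)/2 (pointwise). Then for every performance p with ∑_{ω : S(ω)=1} I₁(ω)·p(ω) > 0, the ranking scores R_{I₁}(p), R_{I₂}(p), R_I(p) are all defined and nonzero, and 1 / R_I(p) = (1/2)·(1 / R_{I₁}(p)) + (1/2)·(1 / R_{I₂}(p)). -/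
/-!
For a `0/1`-valued satisfaction the numerator of `R_I(p)` is `∑_{S = 1} I p`, which is the same
number `N` for `I₁`, `I₂` and their mean `I`, since these agree on `{S = 1}`. So `1 / R_J(p)` is
`(∑ J p) / N`, linear in `J`, and the reciprocal score of the mean importance is the mean of the
reciprocal scores. Nonnegativity makes each denominator at least `N > 0`.
-/

open Finset

section

variable {Ω : Type*} [Fintype Ω] {S : Ω → ℝ}

lemma sum_mul_mul_eq_sum_filter_of_binary (hS : ∀ ω, S ω = 0 ∨ S ω = 1) (I p : Ω → ℝ) :
    ∑ ω, I ω * S ω * p ω = ∑ ω ∈ univ.filter (fun ω => S ω = 1), I ω * p ω := by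
  rw [sum_filter]
  refine sum_congr rfl fun ω _ => ?_
  rcases hS ω with h | h <;> simp [h]

lemma rankingScore_eq_of_binary (hS : ∀ ω, S ω = 0 ∨ S ω = 1) (I p : Ω → ℝ) :
    rankingScore I S p =
      (∑ ω ∈ univ.filter (fun ω => S ω = 1), I ω * p ω) / ∑ ω, I ω * p ω := by
  rw [rankingScore, sum_mul_mul_eq_sum_filter_of_binary hS]

lemma sum_filter_mul_le_sum_mul {I p : Ω → ℝ} (hI : ∀ ω, 0 ≤ I ω) (hp : ∀ ω, 0 ≤ p ω)
    (P : Ω → Prop) [DecidablePred P] :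
    ∑ ω ∈ univ.filter P, I ω * p ω ≤ ∑ ω, I ω * p ω :=
  sum_le_sum_of_subset_of_nonneg (filter_subset _ _) fun ω _ _ => mul_nonneg (hI ω) (hp ω)

end

theorem stmt10_general {Ω : Type*} [Fintype Ω] (S I₁ I₂ : Ω → ℝ)
    (hI₁ : IsImportance I₁) (hI₂ : IsImportance I₂)
    (hS : ∀ ω, S ω = 0 ∨ S ω = 1)
    (heq : ∀ ω, S ω = 1 → I₁ ω = I₂ ω)
    (p : Ω → ℝ) (hp : IsPerformance p)
    (hpos : 0 < ∑ ω ∈ Finset.univ.filter (fun ω => S ω = 1), I₁ ω * p ω) :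
    (∑ ω, I₁ ω * p ω ≠ 0) ∧ (∑ ω, I₂ ω * p ω ≠ 0) ∧
    (∑ ω, ((I₁ ω + I₂ ω) / 2) * p ω ≠ 0) ∧
    rankingScore I₁ S p ≠ 0 ∧ rankingScore I₂ S p ≠ 0 ∧
    rankingScore (fun ω => (I₁ ω + I₂ ω) / 2) S p ≠ 0 ∧
    1 / rankingScore (fun ω => (I₁ ω + I₂ ω) / 2) S p =
      (1 / 2) * (1 / rankingScore I₁ S p) + (1 / 2) * (1 / rankingScore I₂ S p) := by
  set N := ∑ ω ∈ univ.filter (fun ω => S ω = 1), I₁ ω * p ω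
  have hnum (J : Ω → ℝ) (hJ : ∀ ω, S ω = 1 → J ω = I₁ ω) :
      ∑ ω ∈ univ.filter (fun ω => S ω = 1), J ω * p ω = N :=
    sum_congr rfl fun ω hω => by rw [hJ ω (mem_filter.1 hω).2]
  have hden (J : Ω → ℝ) (hJ₀ : ∀ ω, 0 ≤ J ω) (hJ : ∀ ω, S ω = 1 → J ω = I₁ ω) :
      0 < ∑ ω, J ω * p ω :=
    hpos.trans_le (hnum J hJ ▸ sum_filter_mul_le_sum_mul hJ₀ hp.1 _)
  have hR (J : Ω → ℝ) (hJ : ∀ ω, S ω = 1 → J ω = I₁ ω) :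
      rankingScore J S p = N / ∑ ω, J ω * p ω := by
    rw [rankingScore_eq_of_binary hS, hnum J hJ]
  have hI₂eq : ∀ ω, S ω = 1 → I₂ ω = I₁ ω := fun ω h => (heq ω h).symm
  have hmeq : ∀ ω, S ω = 1 → (I₁ ω + I₂ ω) / 2 = I₁ ω := fun ω h => by rw [heq ω h]; ring
  have h₁ := hden I₁ hI₁.1 fun _ _ => rfl
  have h₂ := hden I₂ hI₂.1 hI₂eq
  have hm := hden _ (fun ω => by linarith [hI₁.1 ω, hI₂.1 ω]) hmeq
  refine ⟨h₁.ne', h₂.ne', hm.ne', ?_, ?_, ?_, ?_⟩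
  · rw [hR I₁ fun _ _ => rfl]; positivity
  · rw [hR I₂ hI₂eq]; positivity
  · rw [hR _ hmeq]; positivity
  · have hsum : ∑ ω, (I₁ ω + I₂ ω) / 2 * p ω = (∑ ω, I₁ ω * p ω + ∑ ω, I₂ ω * p ω) / 2 := by
      rw [← sum_add_distrib, sum_div]
      exact sum_congr rfl fun ω _ => by ring
    rw [hR I₁ fun _ _ => rfl, hR I₂ hI₂eq, hR _ hmeq, one_div_div, one_div_div, one_div_div, hsum]
    ring

theorem stmt10 {Ω : Type*} [Fintype Ω] [Nonempty Ω] (S I₁ I₂ : Ω → ℝ)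
    (hI₁ : IsImportance I₁) (hI₂ : IsImportance I₂)
    (hS : ∀ ω, S ω = 0 ∨ S ω = 1)
    (heq : ∀ ω, S ω = 1 → I₁ ω = I₂ ω)
    (p : Ω → ℝ) (hp : IsPerformance p)
    (hpos : 0 < ∑ ω ∈ Finset.univ.filter (fun ω => S ω = 1), I₁ ω * p ω) :
    (∑ ω, I₁ ω * p ω ≠ 0) ∧ (∑ ω, I₂ ω * p ω ≠ 0) ∧
    (∑ ω, ((I₁ ω + I₂ ω) / 2) * p ω ≠ 0) ∧
    rankingScore I₁ S p ≠ 0 ∧ rankingScore I₂ S p ≠ 0 ∧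
    rankingScore (fun ω => (I₁ ω + I₂ ω) / 2) S p ≠ 0 ∧
    1 / rankingScore (fun ω => (I₁ ω + I₂ ω) / 2) S p =
      (1 / 2) * (1 / rankingScore I₁ S p) + (1 / 2) * (1 / rankingScore I₂ S p) :=
  stmt10_general S I₁ I₂ hI₁ hI₂ hS heq p hp hpos
end

section
/- Dual mean property of ranking scores: assume S(ω) ∈ {0,1} for all ω ∈ Ω, let I₁ and I₂ be importances with I₁(ω) = I₂(ω) for every ω with S(ω) = 0, and let I = (I₁ + I₂)/2 (pointwise). Then for every performance p with ∑_{ω : S(ω)=0} I₁(ω)·p(ω) > 0, the ranking scores R_{I₁}(p), R_{I₂}(p), R_I(p) are all defined and strictly less than 1, and 1 / (1 − R_I(p)) = (1/2)·(1 / (1 − R_{I₁}(p))) + (1/2)·(1 / (1 − R_{I₂}(p))). -/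
/-!
With `D = ∑ I p` and `N = ∑ I S p` one has `1 / (1 - R_I) = D / (D - N)`, and for a `{0,1}`-valued
satisfaction `D - N` is the mass `∑_{S = 0} I p` of the unsatisfied outcomes. That mass is the same
for `I₁`, `I₂` and their mean, since they agree where `S = 0`; so `1 / (1 - R_I)` is `D / c` for one
constant `c > 0`, and it is affine in `I` because `D` is.
-/

section RankingScore

variable {Ω : Type*} [Fintype Ω] {I S p : Ω → ℝ}

lemma one_div_one_sub_rankingScore (hD : ∑ ω, I ω * p ω ≠ 0) :
    1 / (1 - rankingScore I S p) =
      (∑ ω, I ω * p ω) / (∑ ω, I ω * p ω - ∑ ω, I ω * S ω * p ω) := by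
  rw [rankingScore, one_sub_div hD, one_div_div]

lemma sum_mul_sub_sum_mul_mul_eq_sum_filter (hS : ∀ ω, S ω = 0 ∨ S ω = 1) :
    ∑ ω, I ω * p ω - ∑ ω, I ω * S ω * p ω =
      ∑ ω ∈ Finset.univ.filter (fun ω => S ω = 0), I ω * p ω := by
  rw [Finset.sum_filter, ← Finset.sum_sub_distrib]
  refine Finset.sum_congr rfl fun ω _ => ?_
  rcases hS ω with h | h <;> simp [h]

lemma sum_mul_mul_nonneg (hI : ∀ ω, 0 ≤ I ω) (hS : ∀ ω, 0 ≤ S ω) (hp : ∀ ω, 0 ≤ p ω) :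
    0 ≤ ∑ ω, I ω * S ω * p ω :=
  Finset.sum_nonneg fun ω _ => mul_nonneg (mul_nonneg (hI ω) (hS ω)) (hp ω)

variable (hI : ∀ ω, 0 ≤ I ω) (hp : ∀ ω, 0 ≤ p ω) (hS : ∀ ω, S ω = 0 ∨ S ω = 1)
  (hF : 0 < ∑ ω ∈ Finset.univ.filter (fun ω => S ω = 0), I ω * p ω)
include hI hp hS hF

lemma sum_mul_pos_of_sum_filter_pos : 0 < ∑ ω, I ω * p ω := by
  have hN := sum_mul_mul_nonneg hI (fun ω => (hS ω).elim (·.ge) (· ▸ zero_le_one)) hp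
  linarith [sum_mul_sub_sum_mul_mul_eq_sum_filter (I := I) (p := p) hS]

lemma rankingScore_lt_one_of_sum_filter_pos : rankingScore I S p < 1 := by
  rw [rankingScore, div_lt_one (sum_mul_pos_of_sum_filter_pos hI hp hS hF)]
  linarith [sum_mul_sub_sum_mul_mul_eq_sum_filter (I := I) (p := p) hS]

lemma one_div_one_sub_rankingScore_eq_div_sum_filter :
    1 / (1 - rankingScore I S p) =
      (∑ ω, I ω * p ω) / ∑ ω ∈ Finset.univ.filter (fun ω => S ω = 0), I ω * p ω := by
  rw [one_div_one_sub_rankingScore (sum_mul_pos_of_sum_filter_pos hI hp hS hF).ne',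
    sum_mul_sub_sum_mul_mul_eq_sum_filter hS]

end RankingScore

theorem stmt11_general {Ω : Type*} [Fintype Ω] (S I₁ I₂ : Ω → ℝ)
    (hI₁ : IsImportance I₁) (hI₂ : IsImportance I₂)
    (hS : ∀ ω, S ω = 0 ∨ S ω = 1)
    (heq : ∀ ω, S ω = 0 → I₁ ω = I₂ ω)
    (p : Ω → ℝ) (hp : IsPerformance p)
    (hpos : 0 < ∑ ω ∈ Finset.univ.filter (fun ω => S ω = 0), I₁ ω * p ω) :
    (∑ ω, I₁ ω * p ω ≠ 0) ∧ (∑ ω, I₂ ω * p ω ≠ 0) ∧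
    (∑ ω, ((I₁ ω + I₂ ω) / 2) * p ω ≠ 0) ∧
    rankingScore I₁ S p < 1 ∧ rankingScore I₂ S p < 1 ∧
    rankingScore (fun ω => (I₁ ω + I₂ ω) / 2) S p < 1 ∧
    1 / (1 - rankingScore (fun ω => (I₁ ω + I₂ ω) / 2) S p) =
      (1 / 2) * (1 / (1 - rankingScore I₁ S p)) +
        (1 / 2) * (1 / (1 - rankingScore I₂ S p)) := by
  set c := ∑ ω ∈ Finset.univ.filter (fun ω => S ω = 0), I₁ ω * p ω
  have hc₂ : ∑ ω ∈ Finset.univ.filter (fun ω => S ω = 0), I₂ ω * p ω = c :=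
    Finset.sum_congr rfl fun ω hω => by rw [heq ω (Finset.mem_filter.1 hω).2]
  have hcₘ : ∑ ω ∈ Finset.univ.filter (fun ω => S ω = 0), (I₁ ω + I₂ ω) / 2 * p ω = c :=
    Finset.sum_congr rfl fun ω hω => by rw [heq ω (Finset.mem_filter.1 hω).2]; ring
  have hIₘ : ∀ ω, 0 ≤ (I₁ ω + I₂ ω) / 2 := fun ω => by linarith [hI₁.1 ω, hI₂.1 ω]
  have hDₘ : ∑ ω, (I₁ ω + I₂ ω) / 2 * p ω = (∑ ω, I₁ ω * p ω + ∑ ω, I₂ ω * p ω) / 2 := by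
    rw [← Finset.sum_add_distrib, Finset.sum_div]
    exact Finset.sum_congr rfl fun ω _ => by ring
  have hpos₂ : 0 < ∑ ω ∈ Finset.univ.filter (fun ω => S ω = 0), I₂ ω * p ω := hc₂ ▸ hpos
  have hposₘ : 0 < ∑ ω ∈ Finset.univ.filter (fun ω => S ω = 0), (I₁ ω + I₂ ω) / 2 * p ω :=
    hcₘ ▸ hpos
  refine ⟨(sum_mul_pos_of_sum_filter_pos hI₁.1 hp.1 hS hpos).ne',
    (sum_mul_pos_of_sum_filter_pos hI₂.1 hp.1 hS hpos₂).ne',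
    (sum_mul_pos_of_sum_filter_pos hIₘ hp.1 hS hposₘ).ne',
    rankingScore_lt_one_of_sum_filter_pos hI₁.1 hp.1 hS hpos,
    rankingScore_lt_one_of_sum_filter_pos hI₂.1 hp.1 hS hpos₂,
    rankingScore_lt_one_of_sum_filter_pos hIₘ hp.1 hS hposₘ, ?_⟩
  rw [one_div_one_sub_rankingScore_eq_div_sum_filter hI₁.1 hp.1 hS hpos,
    one_div_one_sub_rankingScore_eq_div_sum_filter hI₂.1 hp.1 hS hpos₂,
    one_div_one_sub_rankingScore_eq_div_sum_filter hIₘ hp.1 hS hposₘ, hc₂, hcₘ, hDₘ]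
  ring

theorem stmt11 {Ω : Type*} [Fintype Ω] [Nonempty Ω] (S I₁ I₂ : Ω → ℝ)
    (hI₁ : IsImportance I₁) (hI₂ : IsImportance I₂)
    (hS : ∀ ω, S ω = 0 ∨ S ω = 1)
    (heq : ∀ ω, S ω = 0 → I₁ ω = I₂ ω)
    (p : Ω → ℝ) (hp : IsPerformance p)
    (hpos : 0 < ∑ ω ∈ Finset.univ.filter (fun ω => S ω = 0), I₁ ω * p ω) :
    (∑ ω, I₁ ω * p ω ≠ 0) ∧ (∑ ω, I₂ ω * p ω ≠ 0) ∧
    (∑ ω, ((I₁ ω + I₂ ω) / 2) * p ω ≠ 0) ∧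
    rankingScore I₁ S p < 1 ∧ rankingScore I₂ S p < 1 ∧
    rankingScore (fun ω => (I₁ ω + I₂ ω) / 2) S p < 1 ∧
    1 / (1 - rankingScore (fun ω => (I₁ ω + I₂ ω) / 2) S p) =
      (1 / 2) * (1 / (1 - rankingScore I₁ S p)) +
        (1 / 2) * (1 / (1 - rankingScore I₂ S p)) :=
  stmt11_general S I₁ I₂ hI₁ hI₂ hS heq p hp hpos
end

section
/- Convexity of contour sets of ranking scores: for every real v, each of the five sets {p ∈ dom(R_I) : R_I(p) < v}, {p ∈ dom(R_I) : R_I(p) ≤ v}, {p ∈ dom(R_I) : R_I(p) = v}, {p ∈ dom(R_I) : R_I(p) ≥ v}, and {p ∈ dom(R_I) : R_I(p) > v} is a convex subset of the real vector space of functions Ω → ℝ. -/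
/-!
On its domain the denominator `∑ I p` is positive, so `R_I p ≤ r` is equivalent to the linear
inequality `∑ I (S - r) p ≤ 0`. Hence every sublevel set of `R_I` is the domain (a convex set) cut
by a half-space, i.e. `R_I` is quasiconvex; applied to `-S` this gives quasiconcavity. The five
contour sets are then sub- or superlevel sets of a quasilinear function, or intersections of two.
-/

theorem QuasilinearOn.convex_setOf_eq {𝕜 E β : Type*} [Semiring 𝕜] [PartialOrder 𝕜]
    [AddCommMonoid E] [SMul 𝕜 E] [PartialOrder β] {s : Set E} {f : E → β}
    (hf : QuasilinearOn 𝕜 s f) (r : β) : Convex 𝕜 {x ∈ s | f x = r} := by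
  have hsplit : {x ∈ s | f x = r} = {x ∈ s | f x ≤ r} ∩ {x ∈ s | r ≤ f x} := by
    ext x
    simp only [Set.mem_ofPred_eq, Set.mem_inter_iff, le_antisymm_iff]
    tauto
  rw [hsplit]
  exact (hf.1 r).inter (hf.2 r)

namespace RankingScore

variable {Ω : Type*} [Fintype Ω]

theorem isLinearMap_weightedSum (w : Ω → ℝ) : IsLinearMap ℝ fun p : Ω → ℝ => ∑ ω, w ω * p ω where
  map_add p q := by simp only [Pi.add_apply, mul_add, Finset.sum_add_distrib]
  map_smul c p := by
    simp only [Pi.smul_apply, smul_eq_mul, Finset.mul_sum]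
    exact Finset.sum_congr rfl fun ω _ => by ring

/-- The domain `dom(R_I)` of the ranking score. -/
def domain (I : Ω → ℝ) : Set (Ω → ℝ) :=
  {p | IsPerformance p ∧ ∑ ω, I ω * p ω ≠ 0}

theorem domain_eq {I : Ω → ℝ} (hI : ∀ ω, 0 ≤ I ω) :
    domain I = stdSimplex ℝ Ω ∩ {p | 0 < ∑ ω, I ω * p ω} := by
  ext p
  refine ⟨fun ⟨hp, hD⟩ => ⟨hp, lt_of_le_of_ne ?_ hD.symm⟩, fun ⟨hp, hD⟩ => ⟨hp, hD.ne'⟩⟩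
  exact Finset.sum_nonneg fun ω _ => mul_nonneg (hI ω) (hp.1 ω)

theorem convex_domain {I : Ω → ℝ} (hI : ∀ ω, 0 ≤ I ω) : Convex ℝ (domain I) := by
  rw [domain_eq hI]
  exact (convex_stdSimplex ℝ Ω).inter (convex_halfSpace_gt (isLinearMap_weightedSum I) 0)

theorem rankingScore_le_iff {I : Ω → ℝ} (S : Ω → ℝ) {p : Ω → ℝ} (hD : 0 < ∑ ω, I ω * p ω)
    (r : ℝ) : rankingScore I S p ≤ r ↔ ∑ ω, I ω * (S ω - r) * p ω ≤ 0 := by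
  have hlin : ∑ ω, I ω * (S ω - r) * p ω = ∑ ω, I ω * S ω * p ω - r * ∑ ω, I ω * p ω := by
    rw [Finset.mul_sum, ← Finset.sum_sub_distrib]
    exact Finset.sum_congr rfl fun ω _ => by ring
  rw [rankingScore, div_le_iff₀ hD, hlin, sub_nonpos]

theorem rankingScore_neg (I S p : Ω → ℝ) : rankingScore I (-S) p = -rankingScore I S p := by
  simp only [rankingScore, Pi.neg_apply, mul_neg, neg_mul, Finset.sum_neg_distrib, neg_div]

theorem quasiconvexOn_rankingScore {I : Ω → ℝ} (S : Ω → ℝ) (hI : ∀ ω, 0 ≤ I ω) :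
    QuasiconvexOn ℝ (domain I) (rankingScore I S) := by
  intro r
  have hsub : {p ∈ domain I | rankingScore I S p ≤ r} =
      domain I ∩ {p | ∑ ω, I ω * (S ω - r) * p ω ≤ 0} := by
    ext p
    refine and_congr_right fun hp => rankingScore_le_iff S ?_ r
    rw [domain_eq hI] at hp
    exact hp.2
  rw [hsub]
  exact (convex_domain hI).inter
    (convex_halfSpace_le (isLinearMap_weightedSum fun ω => I ω * (S ω - r)) 0)

theorem quasilinearOn_rankingScore {I : Ω → ℝ} (S : Ω → ℝ) (hI : ∀ ω, 0 ≤ I ω) :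
    QuasilinearOn ℝ (domain I) (rankingScore I S) := by
  refine ⟨quasiconvexOn_rankingScore S hI, ?_⟩
  have hneg := (quasiconvexOn_rankingScore (-S) hI).antitone_comp fun _ _ => neg_le_neg
  have hcomp : (fun x => -x) ∘ rankingScore I (-S) = rankingScore I S := by
    funext p
    simp only [Function.comp_apply, rankingScore_neg, neg_neg]
  rwa [hcomp] at hneg

end RankingScore

theorem stmt12_general {Ω : Type*} [Fintype Ω] (S I : Ω → ℝ)
    (hI : IsImportance I) (v : ℝ) :
    Convex ℝ {p : Ω → ℝ | (IsPerformance p ∧ ∑ ω, I ω * p ω ≠ 0) ∧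
        rankingScore I S p < v} ∧
    Convex ℝ {p : Ω → ℝ | (IsPerformance p ∧ ∑ ω, I ω * p ω ≠ 0) ∧
        rankingScore I S p ≤ v} ∧
    Convex ℝ {p : Ω → ℝ | (IsPerformance p ∧ ∑ ω, I ω * p ω ≠ 0) ∧
        rankingScore I S p = v} ∧
    Convex ℝ {p : Ω → ℝ | (IsPerformance p ∧ ∑ ω, I ω * p ω ≠ 0) ∧
        v ≤ rankingScore I S p} ∧
    Convex ℝ {p : Ω → ℝ | (IsPerformance p ∧ ∑ ω, I ω * p ω ≠ 0) ∧
        v < rankingScore I S p} := by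
  have hR := RankingScore.quasilinearOn_rankingScore S hI.1
  exact ⟨hR.1.convex_lt v, hR.1 v, hR.convex_setOf_eq v, hR.2 v, hR.2.convex_gt v⟩

theorem stmt12 {Ω : Type*} [Fintype Ω] [Nonempty Ω] (S I : Ω → ℝ)
    (hI : IsImportance I) (v : ℝ) :
    Convex ℝ {p : Ω → ℝ | (IsPerformance p ∧ ∑ ω, I ω * p ω ≠ 0) ∧
        rankingScore I S p < v} ∧
    Convex ℝ {p : Ω → ℝ | (IsPerformance p ∧ ∑ ω, I ω * p ω ≠ 0) ∧
        rankingScore I S p ≤ v} ∧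
    Convex ℝ {p : Ω → ℝ | (IsPerformance p ∧ ∑ ω, I ω * p ω ≠ 0) ∧
        rankingScore I S p = v} ∧
    Convex ℝ {p : Ω → ℝ | (IsPerformance p ∧ ∑ ω, I ω * p ω ≠ 0) ∧
        v ≤ rankingScore I S p} ∧
    Convex ℝ {p : Ω → ℝ | (IsPerformance p ∧ ∑ ω, I ω * p ω ≠ 0) ∧
        v < rankingScore I S p} :=
  stmt12_general S I hI v
end

section
/- Under the satisfaction axiom, a performance concentrated on the maximum satisfaction is among the best: let ≲ be a reflexive transitive relation on performances such that for all s ∈ ℝ and all performances p₁, p₂ with p₁({ω : S(ω) ≤ s}) = 1 and p₂({ω : S(ω) ≥ s}) = 1, one has p₁ ≲ p₂ or p₁ ≁ p₂. Let s_max = max_{ω∈Ω} S(ω). Then for every performance p with p({ω : S(ω) = s_max}) = 1, there exists no performance p' with p < p'. -/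
theorem IsPerformance.sum_filter_of_forall {Ω : Type*} [Fintype Ω] {p : Ω → ℝ}
    (hp : IsPerformance p) {P : Ω → Prop} [DecidablePred P] (hP : ∀ ω, P ω) :
    ∑ ω ∈ Finset.univ.filter P, p ω = 1 := by
  rw [Finset.filter_true_of_mem fun ω _ => hP ω]
  exact hp.2

theorem Finset.filter_sup'_le_eq {ι α : Type*} [LinearOrder α] (s : Finset ι)
    (hs : s.Nonempty) (f : ι → α) :
    s.filter (fun i => s.sup' hs f ≤ f i) = s.filter (fun i => f i = s.sup' hs f) :=
  Finset.filter_congr fun _ hi =>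
    ⟨fun h => le_antisymm (s.le_sup' f hi) h, fun h => h.ge⟩

theorem stmt15_general {Ω : Type*} [Fintype Ω] [Nonempty Ω] (S : Ω → ℝ)
    (rel : (Ω → ℝ) → (Ω → ℝ) → Prop)
    (hax : ∀ (s : ℝ) (p₁ p₂ : Ω → ℝ), IsPerformance p₁ → IsPerformance p₂ →
      ∑ ω ∈ Finset.univ.filter (fun ω => S ω ≤ s), p₁ ω = 1 →
      ∑ ω ∈ Finset.univ.filter (fun ω => s ≤ S ω), p₂ ω = 1 →
      rel p₁ p₂ ∨ (¬ rel p₁ p₂ ∧ ¬ rel p₂ p₁))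
    (p : Ω → ℝ) (hp : IsPerformance p)
    (hmax : ∑ ω ∈ Finset.univ.filter
        (fun ω => S ω = Finset.univ.sup' Finset.univ_nonempty S), p ω = 1) :
    ¬ ∃ p' : Ω → ℝ, IsPerformance p' ∧ rel p p' ∧ ¬ rel p' p := by
  rintro ⟨p', hp', hpp', hp'p⟩
  have hbelow := hp'.sum_filter_of_forall fun ω => Finset.univ.le_sup' S (Finset.mem_univ ω)
  have habove : ∑ ω ∈ Finset.univ.filter
      (fun ω => Finset.univ.sup' Finset.univ_nonempty S ≤ S ω), p ω = 1 := by
    rwa [Finset.filter_sup'_le_eq]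
  rcases hax _ p' p hp' hp hbelow habove with hp'_le_p | ⟨-, hp_not_le_p'⟩
  · exact hp'p hp'_le_p
  · exact hp_not_le_p' hpp'

theorem stmt15 {Ω : Type*} [Fintype Ω] [Nonempty Ω] (S : Ω → ℝ)
    (rel : (Ω → ℝ) → (Ω → ℝ) → Prop)
    (hrefl : Reflexive rel) (htrans : Transitive rel)
    (hax : ∀ (s : ℝ) (p₁ p₂ : Ω → ℝ), IsPerformance p₁ → IsPerformance p₂ →
      ∑ ω ∈ Finset.univ.filter (fun ω => S ω ≤ s), p₁ ω = 1 →
      ∑ ω ∈ Finset.univ.filter (fun ω => s ≤ S ω), p₂ ω = 1 →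
      rel p₁ p₂ ∨ (¬ rel p₁ p₂ ∧ ¬ rel p₂ p₁))
    (p : Ω → ℝ) (hp : IsPerformance p)
    (hmax : ∑ ω ∈ Finset.univ.filter
        (fun ω => S ω = Finset.univ.sup' Finset.univ_nonempty S), p ω = 1) :
    ¬ ∃ p' : Ω → ℝ, IsPerformance p' ∧ rel p p' ∧ ¬ rel p' p :=
  stmt15_general S rel hax p hp hmax
end

section
/- The F-score is a ranking score: on the sample space Ω = {tn, fp, fn, tp} with satisfaction S(tn) = S(tp) = 1 and S(fp) = S(fn) = 0, fix β > 0 and define the importance I by I(tn) = 0, I(fp) = 1/(1+β²), I(fn) = β²/(1+β²), I(tp) = 1. Then for every performance p with (1+β²)·p(tp) + β²·p(fn) + p(fp) ≠ 0, p belongs to dom(R_I) and R_I(p) = (1+β²)·p(tp) / ((1+β²)·p(tp) + β²·p(fn) + p(fp)), i.e., R_I equals the F-score F_β. -/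
/-- The four outcomes of two-class crisp classification. -/
inductive Outcome : Type
  | tn | fp | fn | tp
  deriving DecidableEq

instance instFintypeOutcome : Fintype Outcome :=
  ⟨{Outcome.tn, Outcome.fp, Outcome.fn, Outcome.tp}, fun x => by cases x <;> simp⟩

/-- The satisfaction for two-class crisp classification: 1 on correct results,
0 on incorrect ones. -/
def Ssat : Outcome → ℝ
  | .tn => 1
  | .fp => 0
  | .fn => 0
  | .tp => 1

/-- The importance corresponding to the F-score with parameter `β`. -/
noncomputable def Ifbeta (β : ℝ) : Outcome → ℝ
  | .tn => 0
  | .fp => 1 / (1 + β ^ 2)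
  | .fn => β ^ 2 / (1 + β ^ 2)
  | .tp => 1

theorem Outcome.sum_univ {M : Type*} [AddCommMonoid M] (f : Outcome → M) :
    ∑ ω, f ω = f .tn + f .fp + f .fn + f .tp := by
  change ∑ ω ∈ {.tn, .fp, .fn, .tp}, f ω = _
  simp [add_assoc]

theorem sum_Ifbeta_mul_Ssat_mul (β : ℝ) (p : Outcome → ℝ) :
    ∑ ω, Ifbeta β ω * Ssat ω * p ω = p .tp := by
  simp [Outcome.sum_univ, Ifbeta, Ssat]

theorem sum_Ifbeta_mul (β : ℝ) (p : Outcome → ℝ) :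
    ∑ ω, Ifbeta β ω * p ω =
      ((1 + β ^ 2) * p .tp + β ^ 2 * p .fn + p .fp) / (1 + β ^ 2) := by
  have : 1 + β ^ 2 ≠ 0 := by positivity
  rw [Outcome.sum_univ]
  simp only [Ifbeta]
  field_simp
  ring

theorem stmt18_general (β : ℝ) (p : Outcome → ℝ)
    (hden : (1 + β ^ 2) * p Outcome.tp + β ^ 2 * p Outcome.fn + p Outcome.fp ≠ 0) :
    (∑ ω, Ifbeta β ω * p ω ≠ 0) ∧
    rankingScore (Ifbeta β) Ssat p =
      (1 + β ^ 2) * p Outcome.tp /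
        ((1 + β ^ 2) * p Outcome.tp + β ^ 2 * p Outcome.fn + p Outcome.fp) := by
  have hne : 1 + β ^ 2 ≠ 0 := by positivity
  refine ⟨by rw [sum_Ifbeta_mul]; exact div_ne_zero hden hne, ?_⟩
  rw [rankingScore, sum_Ifbeta_mul_Ssat_mul, sum_Ifbeta_mul, div_div_eq_mul_div, mul_comm]

theorem stmt18 (β : ℝ) (hβ : 0 < β) (p : Outcome → ℝ) (hp : IsPerformance p)
    (hden : (1 + β ^ 2) * p Outcome.tp + β ^ 2 * p Outcome.fn + p Outcome.fp ≠ 0) :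
    (∑ ω, Ifbeta β ω * p ω ≠ 0) ∧
    rankingScore (Ifbeta β) Ssat p =
      (1 + β ^ 2) * p Outcome.tp /
        ((1 + β ^ 2) * p Outcome.tp + β ^ 2 * p Outcome.fn + p Outcome.fp) :=
  stmt18_general β p hden
end
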